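/- Let m be a nonnegative integer and let p(x) = Π_{i=1}^{m} (x − a_i) be a monic real polynomial of degree m (with real numbers a_1, ..., a_m). Then V_m(p)(x) = 1 for every real x. -/

import Mathlib

open Polynomial Finset fwdDiff

lemma taylor_coeff_of_le (f : ℝ[X]) {n k : ℕ} (hf : f.natDegree ≤ n) (hk : n ≤ k) :
    (Polynomial.taylor 1 f).coeff k = f.coeff k := by
  rw [taylor_coeff]
  have h0 : (hasseDeriv k f).natDegree ≤ 0 :=
    le_trans (natDegree_hasseDeriv_le f k) (by omega)
  rw [eq_C_of_natDegree_le_zero h0, eval_C, hasseDeriv_coeff, zero_add, Nat.choose_self,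
    Nat.cast_one, one_mul]

lemma diff_natDegree_le (f : ℝ[X]) {n : ℕ} (hf : f.natDegree ≤ n + 1) :
    (Polynomial.taylor 1 f - f).natDegree ≤ n := by
  apply natDegree_le_iff_coeff_eq_zero.2
  intro k hk
  rw [coeff_sub, taylor_coeff_of_le f hf (by omega), sub_self]

lemma diff_coeff (f : ℝ[X]) {n : ℕ} (hf : f.natDegree ≤ n + 1) :
    (Polynomial.taylor 1 f - f).coeff n = (n + 1) * f.coeff (n + 1) := by
  rw [coeff_sub, taylor_coeff]
  have h1 : (hasseDeriv n f).natDegree ≤ 1 :=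
    le_trans (natDegree_hasseDeriv_le f n) (by omega)
  rw [eq_X_add_C_of_natDegree_le_one h1]
  simp only [eval_add, eval_mul, eval_C, eval_X, mul_one, hasseDeriv_coeff]
  rw [zero_add, Nat.choose_self, Nat.cast_one, one_mul, Nat.add_comm 1 n,
    Nat.choose_succ_self_right]
  push_cast
  ring

lemma fwdDiff_eval (f : ℝ[X]) :
    Δ_[(1:ℝ)] (fun t => f.eval t) = fun t => (Polynomial.taylor 1 f - f).eval t := by
  funext t
  simp [fwdDiff, taylor_eval]

lemma fwdDiff_iter_poly : ∀ (n : ℕ) (f : ℝ[X]), f.natDegree ≤ n → ∀ y : ℝ,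
    (fwdDiff (1:ℝ))^[n] (fun t => f.eval t) y = n.factorial * f.coeff n := by
  intro n
  induction n with
  | zero =>
    intro f hf y
    simp only [Function.iterate_zero, id_eq, Nat.factorial_zero, Nat.cast_one, one_mul]
    conv_lhs => rw [eq_C_of_natDegree_le_zero hf]
    simp
  | succ n ih =>
    intro f hf y
    rw [Function.iterate_succ_apply, fwdDiff_eval,
      ih _ (diff_natDegree_le f hf) y, diff_coeff f hf, Nat.factorial_succ]
    push_cast
    ring



/-- `V m f x = ∑_{j=-m}^{m} (-1)^j f(x-j) f(x+j) / ((m-j)! (m+j)!)`. -/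
noncomputable def V (m : ℕ) (f : ℝ → ℝ) (x : ℝ) : ℝ :=
  ∑ j ∈ Finset.Icc (-(m : ℤ)) (m : ℤ),
    (-1 : ℝ) ^ j * f (x - (j : ℝ)) * f (x + (j : ℝ)) /
      ((((m : ℤ) - j).toNat.factorial : ℝ) * (((m : ℤ) + j).toNat.factorial : ℝ))

theorem stmt_8 (m : ℕ) (a : Fin m → ℝ) (x : ℝ) :
    V m (fun y => ∏ i, (y - a i)) x = 1 := by
  classical
  set Q : ℝ[X] := (∏ i, (Polynomial.C (x + m - a i) - Polynomial.X)) *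
    (∏ i, (Polynomial.C (x - m - a i) + Polynomial.X)) with hQ
  -- factor facts
  have hfac1 : ∀ r : ℝ, (Polynomial.C r - Polynomial.X : ℝ[X]) = -(Polynomial.X - Polynomial.C r) := by
    intro r; ring
  have hne1 : ∀ r : ℝ, (Polynomial.C r - Polynomial.X : ℝ[X]) ≠ 0 := by
    intro r
    rw [hfac1, neg_ne_zero]
    exact X_sub_C_ne_zero r
  have hne2 : ∀ r : ℝ, (Polynomial.C r + Polynomial.X : ℝ[X]) ≠ 0 := by
    intro r
    rw [add_comm]
    exact X_add_C_ne_zero r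
  have hdeg1 : ∀ r : ℝ, (Polynomial.C r - Polynomial.X : ℝ[X]).natDegree = 1 := by
    intro r; rw [hfac1, natDegree_neg, natDegree_X_sub_C]
  have hdeg2 : ∀ r : ℝ, (Polynomial.C r + Polynomial.X : ℝ[X]).natDegree = 1 := by
    intro r; rw [add_comm]; exact natDegree_X_add_C r
  have hd1 : (∏ i, (Polynomial.C (x + m - a i) - Polynomial.X : ℝ[X])).natDegree = m := by
    rw [natDegree_prod _ _ (fun i _ => hne1 _), Finset.sum_congr rfl (fun i _ => hdeg1 _)]
    simp
  have hd2 : (∏ i, (Polynomial.C (x - m - a i) + Polynomial.X : ℝ[X])).natDegree = m := by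
    rw [natDegree_prod _ _ (fun i _ => hne2 _), Finset.sum_congr rfl (fun i _ => hdeg2 _)]
    simp
  have hp1 : (∏ i, (Polynomial.C (x + m - a i) - Polynomial.X : ℝ[X])) ≠ 0 :=
    Finset.prod_ne_zero_iff.2 fun i _ => hne1 _
  have hp2 : (∏ i, (Polynomial.C (x - m - a i) + Polynomial.X : ℝ[X])) ≠ 0 :=
    Finset.prod_ne_zero_iff.2 fun i _ => hne2 _
  have hQdeg : Q.natDegree = 2 * m := by
    rw [hQ, natDegree_mul hp1 hp2, hd1, hd2]; ring
  have hQlc : Q.leadingCoeff = (-1 : ℝ) ^ m := by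
    rw [hQ, leadingCoeff_mul, leadingCoeff_prod, leadingCoeff_prod]
    have h1 : ∀ i : Fin m, (Polynomial.C (x + m - a i) - Polynomial.X : ℝ[X]).leadingCoeff = -1 := by
      intro i
      rw [hfac1, leadingCoeff_neg, (monic_X_sub_C _).leadingCoeff]
    have h2 : ∀ i : Fin m, (Polynomial.C (x - m - a i) + Polynomial.X : ℝ[X]).leadingCoeff = 1 := by
      intro i
      rw [add_comm]; exact (monic_X_add_C _).leadingCoeff
    rw [Finset.prod_congr rfl (fun i _ => h1 i), Finset.prod_congr rfl (fun i _ => h2 i)]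
    simp
  have hQco : Q.coeff (2 * m) = (-1 : ℝ) ^ m := by
    rw [← hQdeg, coeff_natDegree, hQlc]
  have heval : ∀ t : ℝ, Q.eval t =
      (∏ i, (x - (t - m) - a i)) * (∏ i, (x + (t - m) - a i)) := by
    intro t
    rw [hQ]
    simp only [eval_mul, eval_prod, eval_sub, eval_add, eval_C, eval_X]
    congr 1 <;> exact Finset.prod_congr rfl (fun i _ => by ring)
  -- key identity from forward differences
  have key : ∑ k ∈ Finset.range (2 * m + 1),
      (((-1 : ℤ) ^ (2 * m - k) * (2 * m).choose k) • Q.eval ((0:ℝ) + k • (1:ℝ)))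
      = ((2 * m).factorial : ℝ) * (-1 : ℝ) ^ m := by
    rw [← fwdDiff_iter_eq_sum_shift (1:ℝ) (fun t => Q.eval t) (2 * m) 0]
    rw [fwdDiff_iter_poly (2 * m) Q hQdeg.le 0, hQco]
  -- reindex V's sum
  have reindex : ∀ G : ℤ → ℝ, ∑ j ∈ Finset.Icc (-(m:ℤ)) (m:ℤ), G j
      = ∑ k ∈ Finset.range (2*m+1), G ((k:ℤ) - m) := by
    intro G
    refine Finset.sum_nbij' (fun j => (j + m).toNat) (fun k => (k:ℤ) - m) ?_ ?_ ?_ ?_ ?_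
    · intro j hj; simp only [Finset.mem_Icc] at hj; simp only [Finset.mem_range]; omega
    · intro k hk; simp only [Finset.mem_range] at hk; simp only [Finset.mem_Icc]; omega
    · intro j hj; simp only [Finset.mem_Icc] at hj; omega
    · intro k hk; simp only [Finset.mem_range] at hk; omega
    · intro j hj; simp only [Finset.mem_Icc] at hj
      congr 1; omega
  rw [V, reindex]
  have hf0 : ((2*m).factorial : ℝ) ≠ 0 := Nat.cast_ne_zero.2 (Nat.factorial_ne_zero _)
  have step : ∀ k ∈ Finset.range (2*m+1),
      (-1 : ℝ) ^ ((k:ℤ) - m) * (fun y => ∏ i, (y - a i)) (x - (((k:ℤ) - m : ℤ) : ℝ)) *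
        (fun y => ∏ i, (y - a i)) (x + (((k:ℤ) - m : ℤ) : ℝ)) /
        ((((m : ℤ) - ((k:ℤ) - m)).toNat.factorial : ℝ) *
          (((m : ℤ) + ((k:ℤ) - m)).toNat.factorial : ℝ))
      = ((-1:ℝ)^m / ((2*m).factorial : ℝ)) *
        ((((-1 : ℤ) ^ (2 * m - k) * (2 * m).choose k) : ℤ) • Q.eval ((0:ℝ) + k • (1:ℝ))) := by
    intro k hk
    simp only [Finset.mem_range] at hk
    have hk2 : k ≤ 2*m := by omega
    have ht1 : ((m:ℤ) - ((k:ℤ) - m)).toNat = 2*m - k := by omega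
    have ht2 : ((m:ℤ) + ((k:ℤ) - m)).toNat = k := by omega
    have hcast : ((((k:ℤ) - m) : ℤ) : ℝ) = (k:ℝ) - m := by push_cast; ring
    have hz : (-1:ℝ) ^ ((k:ℤ) - (m:ℤ)) = (-1:ℝ)^k * (-1:ℝ)^m := by
      rw [zpow_sub₀ (by norm_num : (-1:ℝ) ≠ 0), zpow_natCast, zpow_natCast,
        div_eq_mul_inv, ← inv_pow, inv_neg, inv_one]
    have hk1 : (-1:ℝ)^k * (-1:ℝ)^k = 1 := by
      rw [← pow_add, ← two_mul, pow_mul]; norm_num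
    have hsign : (-1:ℝ)^(2*m-k) = (-1:ℝ)^k := by
      have h2 : 2*m - k + k = 2*m := by omega
      calc (-1:ℝ)^(2*m-k) = (-1:ℝ)^(2*m-k) * ((-1:ℝ)^k * (-1:ℝ)^k) := by rw [hk1, mul_one]
        _ = ((-1:ℝ)^(2*m)) * (-1:ℝ)^k := by rw [← mul_assoc, ← pow_add, h2]
        _ = (-1:ℝ)^k := by rw [pow_mul]; norm_num
    have hfacto : (((2*m).choose k : ℝ)) * (k.factorial : ℝ) * ((2*m - k).factorial : ℝ)
        = ((2*m).factorial : ℝ) := by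
      exact_mod_cast Nat.choose_mul_factorial_mul_factorial hk2
    have hev : Q.eval ((0:ℝ) + k • (1:ℝ)) =
        (∏ i, (x - ((k:ℝ) - m) - a i)) * (∏ i, (x + ((k:ℝ) - m) - a i)) := by
      rw [show ((0:ℝ) + k • (1:ℝ)) = (k:ℝ) by simp, heval]
    rw [ht1, ht2, hcast, hz, hev, zsmul_eq_mul]
    push_cast
    rw [hsign, ← hfacto]
    have h1 : (k.factorial : ℝ) ≠ 0 := Nat.cast_ne_zero.2 (Nat.factorial_ne_zero _)
    have h2 : ((2*m - k).factorial : ℝ) ≠ 0 := Nat.cast_ne_zero.2 (Nat.factorial_ne_zero _)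
    have h3 : ((2*m).choose k : ℝ) ≠ 0 :=
      Nat.cast_ne_zero.2 (Nat.choose_pos hk2).ne'
    set A := ∏ i, (x - ((k:ℝ) - m) - a i) with hA
    set B := ∏ i, (x + ((k:ℝ) - m) - a i) with hB
    field_simp
  rw [Finset.sum_congr rfl step, ← Finset.mul_sum, key]
  have hk1 : (-1:ℝ)^m * (-1:ℝ)^m = 1 := by
    rw [← pow_add, ← two_mul, pow_mul]; norm_num
  field_simp
  linear_combination hk1
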